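/- For any graph G and any vertex v of G, γ_g(G) − γ_g(G−v) ≤ 2, where γ_g is the game domination number (Dominator-start). -/

import Mathlib

open Classical

noncomputable section

namespace DomGame

variable {V : Type*} [Fintype V]

/-- Closed neighborhood of `v` as a `Finset`. -/
noncomputable def N (G : SimpleGraph V) (v : V) : Finset V :=
  Finset.univ.filter (fun u => G.Adj v u ∨ u = v)

/-- Legal moves given the set `S` of already dominated vertices. -/
noncomputable def moves (G : SimpleGraph V) (S : Finset V) : Finset V :=
  Finset.univ.filter (fun v => ¬ N G v ⊆ S)

lemma card_lt {G : SimpleGraph V} {S : Finset V} (v : V) (hv : v ∈ moves G S) :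
    (Finset.univ \ (S ∪ N G v)).card < (Finset.univ \ S).card := by
  simp only [moves, Finset.mem_filter] at hv
  obtain ⟨u, hu, hus⟩ := Finset.not_subset.mp hv.2
  apply Finset.card_lt_card
  refine ⟨Finset.sdiff_subset_sdiff (le_refl _) Finset.subset_union_left, ?_⟩
  intro hsub
  have := hsub (Finset.mem_sdiff.mpr ⟨Finset.mem_univ u, hus⟩)
  rw [Finset.mem_sdiff, Finset.mem_union] at this
  exact this.2 (Or.inr hu)

mutual
/-- Number of moves with optimal play when it is Dominator's turn and
`S` is the set of already dominated vertices. -/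
noncomputable def gameD (G : SimpleGraph V) (S : Finset V) : ℕ :=
  if h : (moves G S).Nonempty then
    1 + (moves G S).attach.inf' (by simpa using h)
      (fun v => gameS G (S ∪ N G v.1))
  else 0
termination_by (Finset.univ \ S).card
decreasing_by exact card_lt v.1 v.2

/-- Number of moves with optimal play when it is Staller's turn. -/
noncomputable def gameS (G : SimpleGraph V) (S : Finset V) : ℕ :=
  if h : (moves G S).Nonempty then
    1 + (moves G S).attach.sup' (by simpa using h)
      (fun v => gameD G (S ∪ N G v.1))
  else 0
termination_by (Finset.univ \ S).card
decreasing_by exact card_lt v.1 v.2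
end

/-- The (Dominator-start) game domination number. -/
noncomputable def gammaG (G : SimpleGraph V) : ℕ := gameD G ∅

/-- The Staller-start game domination number. -/
noncomputable def gammaG' (G : SimpleGraph V) : ℕ := gameS G ∅

end DomGame

/-! Dominator opens with `v`. Afterwards the closed neighbourhood of `v` is dominated, so `v`
plays no further role and the rest of the game on `G` is at most the Staller-start game on
`G - v` with `N(v)` already dominated. By the Continuation Principle this is at most
`γ_g'(G - v)`, and `γ_g'(G - v) ≤ γ_g(G - v) + 1` since Staller's first move can only help
Dominator in the continuation. -/

namespace DomGame

variable {V : Type*} [Fintype V] {G : SimpleGraph V} {S S' : Finset V} {x : V}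

lemma mem_N {u : V} : u ∈ N G x ↔ G.Adj x u ∨ u = x := by
  simp [N]

lemma self_mem_N (G : SimpleGraph V) (x : V) : x ∈ N G x := mem_N.mpr (Or.inr rfl)

lemma mem_moves : x ∈ moves G S ↔ ¬ N G x ⊆ S := by
  simp [moves]

lemma moves_anti (h : S' ⊆ S) : moves G S ⊆ moves G S' := fun _ hx =>
  mem_moves.mpr fun hsub => mem_moves.mp hx (hsub.trans h)

theorem position_induction (G : SimpleGraph V) {motive : Finset V → Prop}
    (step : ∀ S, (∀ x ∈ moves G S, motive (S ∪ N G x)) → motive S) (S : Finset V) :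
    motive S :=
  step S fun x _ => position_induction G step (S ∪ N G x)
termination_by (Finset.univ \ S).card
decreasing_by exact card_lt x ‹_›

lemma gameD_eq_zero (h : ¬ (moves G S).Nonempty) : gameD G S = 0 := by
  rw [gameD, dif_neg h]

lemma gameS_eq_zero (h : ¬ (moves G S).Nonempty) : gameS G S = 0 := by
  rw [gameS, dif_neg h]

lemma gameD_le_of_mem_moves (hx : x ∈ moves G S) : gameD G S ≤ 1 + gameS G (S ∪ N G x) := by
  rw [gameD, dif_pos ⟨x, hx⟩]
  exact Nat.add_le_add_left (Finset.inf'_le _ (Finset.mem_attach _ ⟨x, hx⟩)) 1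

lemma le_gameS_of_mem_moves (hx : x ∈ moves G S) : 1 + gameD G (S ∪ N G x) ≤ gameS G S := by
  rw [gameS, dif_pos ⟨x, hx⟩]
  exact Nat.add_le_add_left
    (Finset.le_sup' (fun y : moves G S => gameD G (S ∪ N G y)) (Finset.mem_attach _ ⟨x, hx⟩)) 1

lemma exists_gameD_eq (h : (moves G S).Nonempty) :
    ∃ x ∈ moves G S, gameD G S = 1 + gameS G (S ∪ N G x) := by
  obtain ⟨y, -, hy⟩ := Finset.exists_mem_eq_inf' (s := (moves G S).attach)
    (by simpa using h) (fun y : moves G S => gameS G (S ∪ N G y))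
  exact ⟨y, y.2, by rw [gameD, dif_pos h, hy]⟩

lemma exists_gameS_eq (h : (moves G S).Nonempty) :
    ∃ x ∈ moves G S, gameS G S = 1 + gameD G (S ∪ N G x) := by
  obtain ⟨y, -, hy⟩ := Finset.exists_mem_eq_sup' (s := (moves G S).attach)
    (by simpa using h) (fun y : moves G S => gameD G (S ∪ N G y))
  exact ⟨y, y.2, by rw [gameS, dif_pos h, hy]⟩

lemma gameS_le {k : ℕ} (h : ∀ x ∈ moves G S, 1 + gameD G (S ∪ N G x) ≤ k) : gameS G S ≤ k := by
  by_cases hS : (moves G S).Nonempty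
  · obtain ⟨x, hx, hx_eq⟩ := exists_gameS_eq hS
    exact hx_eq ▸ h x hx
  · simp [gameS_eq_zero hS]

/-- The Continuation Principle of Brešar, Klavžar and Rall. -/
theorem gameD_anti_and_gameS_anti (h : S' ⊆ S) :
    gameD G S ≤ gameD G S' ∧ gameS G S ≤ gameS G S' := by
  induction S' using position_induction G generalizing S with
  | step S' ih =>
  constructor
  · by_cases hS : (moves G S).Nonempty
    · obtain ⟨x', hx', hx'_eq⟩ := exists_gameD_eq (hS.mono (moves_anti h))
      -- If `x'` is no longer legal, its neighbourhood is already dominated, so any move will do.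
      obtain ⟨y, hy, hsub⟩ : ∃ y ∈ moves G S, S' ∪ N G x' ⊆ S ∪ N G y := by
        by_cases hx'S : x' ∈ moves G S
        · exact ⟨x', hx'S, Finset.union_subset_union h le_rfl⟩
        · obtain ⟨y, hy⟩ := hS
          refine ⟨y, hy, Finset.union_subset (h.trans Finset.subset_union_left) ?_⟩
          exact (of_not_not fun h => hx'S (mem_moves.mpr h)).trans Finset.subset_union_left
      calc gameD G S ≤ 1 + gameS G (S ∪ N G y) := gameD_le_of_mem_moves hy
        _ ≤ 1 + gameS G (S' ∪ N G x') := Nat.add_le_add_left (ih x' hx' hsub).2 1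
        _ = gameD G S' := hx'_eq.symm
    · simp [gameD_eq_zero hS]
  · refine gameS_le fun x hx => ?_
    have hx' := moves_anti h hx
    calc 1 + gameD G (S ∪ N G x) ≤ 1 + gameD G (S' ∪ N G x) :=
          Nat.add_le_add_left (ih x hx' (Finset.union_subset_union h le_rfl)).1 1
      _ ≤ gameS G S' := le_gameS_of_mem_moves hx'

lemma gameD_anti (h : S' ⊆ S) : gameD G S ≤ gameD G S' := (gameD_anti_and_gameS_anti h).1

lemma gameS_anti (h : S' ⊆ S) : gameS G S ≤ gameS G S' := (gameD_anti_and_gameS_anti h).2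

lemma gameS_le_gameD_add_one (G : SimpleGraph V) (S : Finset V) : gameS G S ≤ gameD G S + 1 :=
  gameS_le fun x _ => by
    have := gameD_anti (G := G) (Finset.subset_union_left (s₁ := S) (s₂ := N G x))
    omega

section Restriction

variable {W : Type*} [Fintype W] (f : W ↪ V)

lemma N_comap (w : W) : N (G.comap f) w = (N G (f w)).preimage f f.injective.injOn := by
  ext u
  simp [mem_N, f.injective.eq_iff]

lemma preimage_union_N (w : W) :
    (S ∪ N G (f w)).preimage f f.injective.injOn =
      S.preimage f f.injective.injOn ∪ N (G.comap f) w := by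
  rw [Finset.preimage_union, N_comap]

lemma mem_moves_of_mem_moves_comap {w : W}
    (hw : w ∈ moves (G.comap f) (S.preimage f f.injective.injOn)) : f w ∈ moves G S := by
  obtain ⟨u, hu, huS⟩ := Finset.not_subset.mp (mem_moves.mp hw)
  rw [N_comap, Finset.mem_preimage] at hu
  exact mem_moves.mpr fun hsub => huS (Finset.mem_preimage.mpr (hsub hu))

lemma exists_mem_moves_comap (hS : ∀ y ∉ Set.range f, N G y ⊆ S) (hx : x ∈ moves G S) :
    ∃ w ∈ moves (G.comap f) (S.preimage f f.injective.injOn), f w = x := by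
  have hxS := mem_moves.mp hx
  obtain ⟨w, rfl⟩ : x ∈ Set.range f := by_contra fun h => hxS (hS x h)
  obtain ⟨u, hu, huS⟩ := Finset.not_subset.mp hxS
  obtain ⟨u, rfl⟩ : u ∈ Set.range f := by_contra fun h => huS (hS u h (self_mem_N G u))
  refine ⟨w, mem_moves.mpr fun hsub => huS (Finset.mem_preimage.mp (hsub ?_)), rfl⟩
  rwa [N_comap, Finset.mem_preimage]

theorem gameD_le_gameD_comap_and_gameS_le_gameS_comap (hS : ∀ y ∉ Set.range f, N G y ⊆ S) :
    gameD G S ≤ gameD (G.comap f) (S.preimage f f.injective.injOn) ∧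
      gameS G S ≤ gameS (G.comap f) (S.preimage f f.injective.injOn) := by
  induction S using position_induction G with
  | step S ih =>
  have ih' := fun x hx => ih x hx fun y hy => (hS y hy).trans Finset.subset_union_left
  constructor
  · by_cases hS' : (moves (G.comap f) (S.preimage f f.injective.injOn)).Nonempty
    · obtain ⟨w, hw, hw_eq⟩ := exists_gameD_eq hS'
      have hfw := mem_moves_of_mem_moves_comap f hw
      calc gameD G S ≤ 1 + gameS G (S ∪ N G (f w)) := gameD_le_of_mem_moves hfw
        _ ≤ 1 + gameS (G.comap f) ((S ∪ N G (f w)).preimage f f.injective.injOn) :=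
          Nat.add_le_add_left (ih' _ hfw).2 1
        _ = gameD (G.comap f) (S.preimage f f.injective.injOn) := by
          rw [preimage_union_N, hw_eq]
    · have hS_empty : ¬ (moves G S).Nonempty := fun ⟨x, hx⟩ =>
        hS' (let ⟨w, hw, _⟩ := exists_mem_moves_comap f hS hx; ⟨w, hw⟩)
      simp [gameD_eq_zero hS_empty]
  · refine gameS_le fun x hx => ?_
    obtain ⟨w, hw, rfl⟩ := exists_mem_moves_comap f hS hx
    calc 1 + gameD G (S ∪ N G (f w))
        ≤ 1 + gameD (G.comap f) ((S ∪ N G (f w)).preimage f f.injective.injOn) :=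
          Nat.add_le_add_left (ih' _ hx).1 1
      _ ≤ gameS (G.comap f) (S.preimage f f.injective.injOn) := by
          rw [preimage_union_N]
          exact le_gameS_of_mem_moves hw

end Restriction

end DomGame

open DomGame in
/-- For any graph `G` and any vertex `v`, `γ_g(G) − γ_g(G−v) ≤ 2`. -/
theorem vertex_removal_gameD {V : Type*} [Fintype V] (G : SimpleGraph V) (v : V) :
    (gammaG G : ℤ) - gammaG (G.induce {v}ᶜ) ≤ 2 := by
  let f := Function.Embedding.subtype (· ∈ ({v}ᶜ : Set V))
  have hv : v ∈ moves G ∅ := mem_moves.mpr fun h => by simpa using h (self_mem_N G v)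
  have hrest : ∀ y ∉ Set.range f, N G y ⊆ ∅ ∪ N G v := fun y hy => by
    obtain rfl : y = v := by simpa [f] using hy
    exact Finset.subset_union_right
  have : gammaG G ≤ gammaG (G.induce {v}ᶜ) + 2 :=
    calc gameD G ∅ ≤ 1 + gameS G (∅ ∪ N G v) := gameD_le_of_mem_moves hv
      _ ≤ 1 + gameS (G.induce {v}ᶜ) _ :=
        Nat.add_le_add_left (gameD_le_gameD_comap_and_gameS_le_gameS_comap f hrest).2 1
      _ ≤ 1 + gameS (G.induce {v}ᶜ) ∅ :=
        Nat.add_le_add_left (gameS_anti (Finset.empty_subset _)) 1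
      _ ≤ gameD (G.induce {v}ᶜ) ∅ + 2 := by
        have := gameS_le_gameD_add_one (G.induce {v}ᶜ) ∅
        omega
  omega
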